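/- Let α ∈ (0, ∞) and let E ⊂ ℝ^N be a measurable set of finite measure. Then there exists C > 0 such that for every measurable function f on ℝ^N, sup_{s>0} { s (log(e + s⁻¹))^α (f χ_E)**(s) } ≤ C ‖f χ_E‖_{L^{1,∞}(log L)^{α+1}}; in particular ‖f χ_E‖_{𝔏^{1,∞}(log 𝔏)^α} ≤ C ‖f χ_E‖_{L^{1,∞}(log L)^{α+1}}. -/

import Mathlib

open MeasureTheory ENNReal Set

noncomputable def Phi (s : ℝ) : ℝ := Real.log (Real.exp 1 + s)

/-- The non-increasing rearrangement of `f`, with `inf ∅ = ∞`. -/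
noncomputable def rearr {E : Type*} [MeasureSpace E] (f : E → ℝ) (s : ℝ) : ℝ≥0∞ :=
  sInf {l : ℝ≥0∞ | volume {x | l < (‖f x‖₊ : ℝ≥0∞)} ≤ ENNReal.ofReal s}

/-- The maximal (averaged) rearrangement `f**(s) = (1/s)∫₀ˢ f*(τ) dτ`. -/
noncomputable def rearrStar {E : Type*} [MeasureSpace E] (f : E → ℝ) (s : ℝ) : ℝ≥0∞ :=
  (ENNReal.ofReal s)⁻¹ * ∫⁻ τ in Set.Ioo (0 : ℝ) s, rearr f τ

/-! With `u = (f χ_E)*` and `R` its `L^{1,∞}(log L)^{α+1}` norm, `u τ ≤ R / (τ Φ(1/τ)^{α+1})`,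
and `u` vanishes beyond `|E|`. Since `τ ↦ Φ(1/τ)^{-α}` is increasing with derivative
`α Φ(1/τ)^{-α-1} / (e τ² + τ)`, integrating this bound over `(0, t)`, `t = min s m` with `m > |E|`,
gives `∫₀ˢ u ≤ R (e m + 1) / α · Φ(1/t)^{-α}`, and `Φ(1/s) ≤ Φ(1/t)`. -/

lemma one_le_Phi {x : ℝ} (hx : 0 ≤ x) : 1 ≤ Phi x := by
  simpa [Phi] using Real.log_le_log (Real.exp_pos 1) (le_add_of_nonneg_right hx)

lemma Phi_pos {x : ℝ} (hx : 0 ≤ x) : 0 < Phi x :=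
  one_pos.trans_le (one_le_Phi hx)

lemma Phi_le_Phi {x y : ℝ} (hx : 0 ≤ x) (hxy : x ≤ y) : Phi x ≤ Phi y :=
  Real.log_le_log (by positivity) (by linarith)

lemma Phi_rpow_pos {x : ℝ} (hx : 0 ≤ x) (β : ℝ) : 0 < Phi x ^ β :=
  Real.rpow_pos_of_pos (Phi_pos hx) β

lemma measurable_Phi : Measurable Phi := by
  unfold Phi; fun_prop

lemma hasDerivAt_Phi_inv_rpow (β : ℝ) {τ : ℝ} (hτ : 0 < τ) :
    HasDerivAt (fun τ => Phi τ⁻¹ ^ β)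
      (-β * Phi τ⁻¹ ^ (β - 1) * (Real.exp 1 * τ ^ 2 + τ)⁻¹) τ := by
  have hinv : HasDerivAt (fun τ => Real.exp 1 + τ⁻¹) (-(τ ^ 2)⁻¹) τ :=
    (hasDerivAt_inv hτ.ne').const_add _
  have hPhi : HasDerivAt (fun τ => Phi τ⁻¹) (-(τ ^ 2)⁻¹ / (Real.exp 1 + τ⁻¹)) τ :=
    hinv.log (by positivity)
  convert hPhi.rpow_const (p := β) (Or.inl (Phi_pos (inv_nonneg.2 hτ.le)).ne') using 1
  field_simp

lemma monotoneOn_Phi_inv_rpow_neg {α : ℝ} (hα : 0 ≤ α) :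
    MonotoneOn (fun τ => Phi τ⁻¹ ^ (-α)) (Ioi 0) := fun _ ha _ _ hab =>
  Real.rpow_le_rpow_of_nonpos (Phi_pos (inv_nonneg.2 (ha.out.le.trans hab)))
    (Phi_le_Phi (inv_nonneg.2 (ha.out.le.trans hab)) (inv_anti₀ ha hab)) (neg_nonpos.2 hα)

lemma inv_mul_Phi_rpow_le {α τ t : ℝ} (hα : 0 < α) (hτ : 0 < τ) (hτt : τ ≤ t) :
    (τ * Phi τ⁻¹ ^ (α + 1))⁻¹ ≤
      (Real.exp 1 * t + 1) / α * (α * Phi τ⁻¹ ^ (-α - 1) * (Real.exp 1 * τ ^ 2 + τ)⁻¹) := by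
  have hL := Phi_pos (inv_nonneg.2 hτ.le)
  have hden : τ⁻¹ ≤ (Real.exp 1 * t + 1) / (Real.exp 1 * τ ^ 2 + τ) := by
    rw [inv_eq_one_div, div_le_div_iff₀ hτ (by positivity)]
    nlinarith [mul_nonneg (mul_nonneg (Real.exp_pos 1).le hτ.le) (sub_nonneg.2 hτt)]
  calc (τ * Phi τ⁻¹ ^ (α + 1))⁻¹ = Phi τ⁻¹ ^ (-α - 1) * τ⁻¹ := by
        rw [mul_inv, ← Real.rpow_neg hL.le, neg_add', mul_comm]
    _ ≤ Phi τ⁻¹ ^ (-α - 1) * ((Real.exp 1 * t + 1) / (Real.exp 1 * τ ^ 2 + τ)) := by gcongr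
    _ = _ := by field_simp

lemma lintegral_inv_mul_Phi_rpow_le {α t : ℝ} (hα : 0 < α) (ht : 0 < t) :
    ∫⁻ τ in Ioo 0 t, ENNReal.ofReal ((τ * Phi τ⁻¹ ^ (α + 1))⁻¹) ≤
      ENNReal.ofReal ((Real.exp 1 * t + 1) / α * Phi t⁻¹ ^ (-α)) := by
  set G : ℝ → ℝ := fun τ => Phi τ⁻¹ ^ (-α)
  set G' : ℝ → ℝ := fun τ => α * Phi τ⁻¹ ^ (-α - 1) * (Real.exp 1 * τ ^ 2 + τ)⁻¹
  have hG : ∀ τ ∈ Ioo 0 t, HasDerivWithinAt G (G' τ) (Ioo 0 t) τ := fun τ hτ => by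
    simpa [G', neg_neg] using (hasDerivAt_Phi_inv_rpow (-α) hτ.1).hasDerivWithinAt
  have hmono : MonotoneOn G (Ioo 0 t) :=
    (monotoneOn_Phi_inv_rpow_neg hα.le).mono Ioo_subset_Ioi_self
  have hvol : ∫⁻ τ in Ioo 0 t, ENNReal.ofReal (G' τ) ≤ ENNReal.ofReal (G t) := by
    rw [lintegral_deriv_eq_volume_image_of_monotoneOn measurableSet_Ioo hG hmono]
    calc volume (G '' Ioo 0 t) ≤ volume (Icc 0 (G t)) := by
          refine measure_mono (image_subset_iff.2 fun τ hτ =>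
            ⟨(Phi_rpow_pos (inv_nonneg.2 hτ.1.le) _).le, ?_⟩)
          exact (monotoneOn_Phi_inv_rpow_neg hα.le) hτ.1 ht hτ.2.le
      _ = ENNReal.ofReal (G t) := by rw [Real.volume_Icc, sub_zero]
  calc ∫⁻ τ in Ioo 0 t, ENNReal.ofReal ((τ * Phi τ⁻¹ ^ (α + 1))⁻¹)
      ≤ ∫⁻ τ in Ioo 0 t, ENNReal.ofReal ((Real.exp 1 * t + 1) / α) * ENNReal.ofReal (G' τ) := by
        refine setLIntegral_mono' measurableSet_Ioo fun τ hτ => ?_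
        rw [← ENNReal.ofReal_mul (by positivity)]
        exact ENNReal.ofReal_le_ofReal (inv_mul_Phi_rpow_le hα hτ.1 hτ.2.le)
    _ = ENNReal.ofReal ((Real.exp 1 * t + 1) / α) * ∫⁻ τ in Ioo 0 t, ENNReal.ofReal (G' τ) :=
        lintegral_const_mul' _ _ ENNReal.ofReal_ne_top
    _ ≤ ENNReal.ofReal ((Real.exp 1 * t + 1) / α) * ENNReal.ofReal (G t) := by gcongr
    _ = ENNReal.ofReal ((Real.exp 1 * t + 1) / α * G t) := by
        rw [ENNReal.ofReal_mul (by positivity)]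

lemma Phi_inv_rpow_mul_rpow_neg_le_one {α s t : ℝ} (hα : 0 ≤ α) (ht : 0 < t) (hts : t ≤ s) :
    Phi s⁻¹ ^ α * Phi t⁻¹ ^ (-α) ≤ 1 := by
  have hΦt := Phi_pos (inv_nonneg.2 ht.le)
  rw [Real.rpow_neg hΦt.le, ← div_eq_mul_inv, div_le_one (Phi_rpow_pos (inv_nonneg.2 ht.le) _)]
  exact Real.rpow_le_rpow (Phi_pos (inv_nonneg.2 (ht.le.trans hts))).le
    (Phi_le_Phi (inv_nonneg.2 (ht.le.trans hts)) (inv_anti₀ ht hts)) hα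

/-- `‖g‖_{L^{1,∞}(log L)^β}`, evaluated on the rearrangement `u = g*`. -/
noncomputable def weakLogNorm (β : ℝ) (u : ℝ → ℝ≥0∞) : ℝ≥0∞ :=
  ⨆ (s : ℝ) (_ : 0 < s), ENNReal.ofReal s * ENNReal.ofReal (Phi s⁻¹ ^ β) * u s

lemma le_weakLogNorm_mul (β : ℝ) (u : ℝ → ℝ≥0∞) {τ : ℝ} (hτ : 0 < τ) :
    u τ ≤ weakLogNorm β u * ENNReal.ofReal ((τ * Phi τ⁻¹ ^ β)⁻¹) := by
  have hw : 0 < τ * Phi τ⁻¹ ^ β := mul_pos hτ (Phi_rpow_pos (by positivity) _)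
  rw [ENNReal.ofReal_inv_of_pos hw, ← div_eq_mul_inv,
    ENNReal.le_div_iff_mul_le (Or.inl (ENNReal.ofReal_pos.2 hw).ne') (Or.inl ofReal_ne_top),
    mul_comm, ENNReal.ofReal_mul hτ.le]
  exact le_iSup₂_of_le τ hτ le_rfl

lemma setLIntegral_Ioo_le_of_eq_zero {u : ℝ → ℝ≥0∞} {m : ℝ} (hu : ∀ τ, m ≤ τ → u τ = 0)
    (s : ℝ) : ∫⁻ τ in Ioo 0 s, u τ ≤ ∫⁻ τ in Ioo 0 (min s m), u τ := by
  have hsub : Ioo 0 s ⊆ Ioo 0 (min s m) ∪ Ici m := fun τ hτ => by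
    rcases lt_or_ge τ m with h | h
    · exact Or.inl ⟨hτ.1, lt_min hτ.2 h⟩
    · exact Or.inr h
  have hzero : ∫⁻ τ in Ici m, u τ = 0 :=
    (setLIntegral_congr_fun measurableSet_Ici hu).trans lintegral_zero
  calc ∫⁻ τ in Ioo 0 s, u τ ≤ ∫⁻ τ in Ioo 0 (min s m) ∪ Ici m, u τ := lintegral_mono_set hsub
    _ ≤ (∫⁻ τ in Ioo 0 (min s m), u τ) + ∫⁻ τ in Ici m, u τ := lintegral_union_le _ _ _
    _ = ∫⁻ τ in Ioo 0 (min s m), u τ := by rw [hzero, add_zero]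

lemma Phi_rpow_mul_lintegral_le_weakLogNorm {α m : ℝ} (hα : 0 < α) (hm : 0 < m)
    {u : ℝ → ℝ≥0∞} (hu : ∀ τ, m ≤ τ → u τ = 0) {s : ℝ} (hs : 0 < s) :
    ENNReal.ofReal (Phi s⁻¹ ^ α) * ∫⁻ τ in Ioo 0 s, u τ ≤
      ENNReal.ofReal ((Real.exp 1 * m + 1) / α) * weakLogNorm (α + 1) u := by
  set t := min s m
  have ht : 0 < t := lt_min hs hm
  have hmeas : Measurable fun τ : ℝ => ENNReal.ofReal ((τ * Phi τ⁻¹ ^ (α + 1))⁻¹) := by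
    have := measurable_Phi; fun_prop
  have hint : ∫⁻ τ in Ioo 0 s, u τ ≤ weakLogNorm (α + 1) u *
      ENNReal.ofReal ((Real.exp 1 * t + 1) / α * Phi t⁻¹ ^ (-α)) :=
    calc ∫⁻ τ in Ioo 0 s, u τ
        ≤ ∫⁻ τ in Ioo 0 t, weakLogNorm (α + 1) u * ENNReal.ofReal ((τ * Phi τ⁻¹ ^ (α + 1))⁻¹) :=
          (setLIntegral_Ioo_le_of_eq_zero hu s).trans <| setLIntegral_mono' measurableSet_Ioo
            fun τ hτ => le_weakLogNorm_mul _ u hτ.1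
      _ = weakLogNorm (α + 1) u * ∫⁻ τ in Ioo 0 t, ENNReal.ofReal ((τ * Phi τ⁻¹ ^ (α + 1))⁻¹) :=
          lintegral_const_mul _ hmeas
      _ ≤ _ := by gcongr; exact lintegral_inv_mul_Phi_rpow_le hα ht
  have hreal : Phi s⁻¹ ^ α * ((Real.exp 1 * t + 1) / α * Phi t⁻¹ ^ (-α)) ≤
      (Real.exp 1 * m + 1) / α :=
    calc Phi s⁻¹ ^ α * ((Real.exp 1 * t + 1) / α * Phi t⁻¹ ^ (-α))
        = (Real.exp 1 * t + 1) / α * (Phi s⁻¹ ^ α * Phi t⁻¹ ^ (-α)) := by ring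
      _ ≤ (Real.exp 1 * m + 1) / α * 1 := by
          gcongr
          · exact (mul_pos (Phi_rpow_pos (by positivity) _)
              (Phi_rpow_pos (inv_nonneg.2 ht.le) _)).le
          · exact min_le_right _ _
          · exact Phi_inv_rpow_mul_rpow_neg_le_one hα.le ht (min_le_left _ _)
      _ = _ := mul_one _
  calc ENNReal.ofReal (Phi s⁻¹ ^ α) * ∫⁻ τ in Ioo 0 s, u τ
      ≤ ENNReal.ofReal (Phi s⁻¹ ^ α) * (weakLogNorm (α + 1) u *
          ENNReal.ofReal ((Real.exp 1 * t + 1) / α * Phi t⁻¹ ^ (-α))) := by gcongr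
    _ = ENNReal.ofReal (Phi s⁻¹ ^ α * ((Real.exp 1 * t + 1) / α * Phi t⁻¹ ^ (-α))) *
          weakLogNorm (α + 1) u := by
        rw [ENNReal.ofReal_mul (Phi_rpow_pos (by positivity) _).le]; ring
    _ ≤ _ := by gcongr

lemma rearr_eq_zero_of_volume_support_le {X : Type*} [MeasureSpace X] {f : X → ℝ} {τ : ℝ}
    (h : volume (Function.support f) ≤ ENNReal.ofReal τ) : rearr f τ = 0 := by
  refine le_antisymm (sInf_le (le_trans (measure_mono fun x hx => ?_) h)) zero_le
  simpa using hx

lemma ofReal_mul_rearrStar {X : Type*} [MeasureSpace X] (f : X → ℝ) {s : ℝ} (hs : 0 < s) :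
    ENNReal.ofReal s * rearrStar f s = ∫⁻ τ in Ioo 0 s, rearr f τ := by
  rw [rearrStar, ← mul_assoc, ENNReal.mul_inv_cancel (ENNReal.ofReal_pos.2 hs).ne' ofReal_ne_top,
    one_mul]

theorem stmt13_general {N : ℕ} (α : ℝ) (hα : 0 < α)
    (E : Set (Fin N → ℝ)) (hEfin : volume E < ∞) :
    ∃ C : ℝ, 0 < C ∧ ∀ f : (Fin N → ℝ) → ℝ, Measurable f →
      (⨆ (s : ℝ) (_ : 0 < s),
          ENNReal.ofReal s * ENNReal.ofReal (Phi s⁻¹ ^ α) * rearrStar (E.indicator f) s) ≤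
        ENNReal.ofReal C *
          ⨆ (s : ℝ) (_ : 0 < s),
            ENNReal.ofReal s * ENNReal.ofReal (Phi s⁻¹ ^ (α + 1)) * rearr (E.indicator f) s ∧
      (⨆ (s : ℝ) (_ : 0 < s),
          ENNReal.ofReal (Phi s⁻¹ ^ α) * ∫⁻ τ in Set.Ioo (0 : ℝ) s, rearr (E.indicator f) τ) ≤
        ENNReal.ofReal C *
          ⨆ (s : ℝ) (_ : 0 < s),
            ENNReal.ofReal s * ENNReal.ofReal (Phi s⁻¹ ^ (α + 1)) * rearr (E.indicator f) s := by
  set m := (volume E).toReal + 1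
  have hm : 0 < m := by positivity
  refine ⟨(Real.exp 1 * m + 1) / α, by positivity, fun f _ => ?_⟩
  have hvanish : ∀ τ, m ≤ τ → rearr (E.indicator f) τ = 0 := fun τ hτ =>
    rearr_eq_zero_of_volume_support_le <| calc
      volume (Function.support (E.indicator f)) ≤ volume E :=
        measure_mono Set.support_indicator_subset
      _ = ENNReal.ofReal (volume E).toReal := (ENNReal.ofReal_toReal hEfin.ne).symm
      _ ≤ ENNReal.ofReal τ := ENNReal.ofReal_le_ofReal (by linarith)
  have key := iSup₂_le fun s (hs : 0 < s) =>
    Phi_rpow_mul_lintegral_le_weakLogNorm hα hm hvanish hs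
  refine ⟨le_trans (iSup₂_mono fun s hs => ?_) key, key⟩
  rw [mul_right_comm, ofReal_mul_rearrStar _ hs, mul_comm]

theorem stmt13 {N : ℕ} (α : ℝ) (hα : 0 < α)
    (E : Set (Fin N → ℝ)) (hE : MeasurableSet E) (hEfin : volume E < ∞) :
    ∃ C : ℝ, 0 < C ∧ ∀ f : (Fin N → ℝ) → ℝ, Measurable f →
      (⨆ (s : ℝ) (_ : 0 < s),
          ENNReal.ofReal s * ENNReal.ofReal (Phi s⁻¹ ^ α) * rearrStar (E.indicator f) s) ≤
        ENNReal.ofReal C *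
          ⨆ (s : ℝ) (_ : 0 < s),
            ENNReal.ofReal s * ENNReal.ofReal (Phi s⁻¹ ^ (α + 1)) * rearr (E.indicator f) s ∧
      (⨆ (s : ℝ) (_ : 0 < s),
          ENNReal.ofReal (Phi s⁻¹ ^ α) * ∫⁻ τ in Set.Ioo (0 : ℝ) s, rearr (E.indicator f) τ) ≤
        ENNReal.ofReal C *
          ⨆ (s : ℝ) (_ : 0 < s),
            ENNReal.ofReal s * ENNReal.ofReal (Phi s⁻¹ ^ (α + 1)) * rearr (E.indicator f) s :=
  stmt13_general α hα E hEfin
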